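/- arXiv:1103.5717 — 4 statements merged into one kernel-verified Lean document; each statement's English description precedes it below -/
import Mathlib

section
/- The constant 4 in the three-dimensional Hardy inequality is optimal: for every ε > 0 there exists a compactly supported function f_ε ∈ W^{1,2}(ℝ³), not identically zero, such that ∫_{ℝ³} f_ε(x)²/|x|² dx > (4 − ε) ∫_{ℝ³} |∇f_ε(x)|² dx. -/
/-!
With `a = (n - 2)/2`, `f(x) = |x|^(-a)` on `ℝⁿ` satisfies `|∇f|² = a² f²/|x|²` pointwise,
but both sides diverge logarithmically at `0` and at infinity. Cut it off at logarithmic scale: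
`f(x) = |x|^(-a) h(b log |x|)` with `h` a bump. In polar coordinates and the variable
`s = log |x|`, both sides become the same constant times `b⁻¹`, namely `∫ f²/|x|² ∝ b⁻¹ ∫ h²`
and `∫ |∇f|² ∝ b⁻¹ ∫ (-a h + b h')²`, and the latter integral tends to `a² ∫ h²` as `b → 0`.
Hence the ratio tends to `a⁻² = 4/(n-2)²`, which is `4` for `n = 3`.
-/

open MeasureTheory Real Set Filter Topology Module

section Radial

variable {E : Type*} [NormedAddCommGroup E] {φ : ℝ → ℝ}

theorem eventuallyEq_zero_comp_norm (h0 : φ =ᶠ[𝓝 0] 0) :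
    (fun x : E => φ ‖x‖) =ᶠ[𝓝 0] 0 :=
  (continuous_norm.tendsto' (0 : E) 0 norm_zero).eventually h0

theorem hasCompactSupport_comp_norm [ProperSpace E] (h : φ =ᶠ[atTop] 0) :
    HasCompactSupport (fun x : E => φ ‖x‖) := by
  rw [hasCompactSupport_iff_eventuallyEq, coclosedCompact_eq_cocompact]
  exact tendsto_norm_cocompact_atTop.eventually h

variable [InnerProductSpace ℝ E]

theorem contDiff_comp_norm {n : WithTop ℕ∞} (hφ : ∀ r > 0, ContDiffAt ℝ n φ r)
    (h0 : φ =ᶠ[𝓝 0] 0) : ContDiff ℝ n (fun x : E => φ ‖x‖) := by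
  refine contDiff_iff_contDiffAt.2 fun x => ?_
  rcases eq_or_ne x 0 with rfl | hx
  · exact contDiffAt_const.congr_of_eventuallyEq (eventuallyEq_zero_comp_norm h0)
  · exact (hφ _ (norm_pos_iff.2 hx)).comp x (contDiffAt_norm ℝ hx)

theorem norm_fderiv_comp_norm (hφ : ∀ r > 0, DifferentiableAt ℝ φ r) (h0 : φ =ᶠ[𝓝 0] 0)
    (x : E) : ‖fderiv ℝ (fun x : E => φ ‖x‖) x‖ = |deriv φ ‖x‖| := by
  rcases eq_or_ne x 0 with rfl | hx
  · rw [(eventuallyEq_zero_comp_norm h0).fderiv_eq, norm_zero, h0.deriv_eq]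
    simp
  · have : Nontrivial E := ⟨⟨x, 0, hx⟩⟩
    have hnorm : DifferentiableAt ℝ (‖·‖) x := (contDiffAt_norm ℝ hx).differentiableAt one_ne_zero
    have hd := (hφ _ (norm_pos_iff.2 hx)).hasDerivAt.comp_hasFDerivAt x hnorm.hasFDerivAt
    rw [show (fun x : E => φ ‖x‖) = φ ∘ (‖·‖) from rfl, hd.fderiv, norm_smul,
      norm_fderiv_norm hnorm, mul_one, Real.norm_eq_abs]

end Radial

theorem HasCompactSupport.eventuallyEq_zero_atBot_sup_atTop {h : ℝ → ℝ}
    (hh : HasCompactSupport h) : h =ᶠ[atBot ⊔ atTop] 0 := by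
  rwa [hasCompactSupport_iff_eventuallyEq, coclosedCompact_eq_cocompact,
    cocompact_eq_atBot_atTop] at hh

section Profile

variable {a b : ℝ} {h : ℝ → ℝ}

noncomputable def hardyProfile (a b : ℝ) (h : ℝ → ℝ) (r : ℝ) : ℝ := r ^ (-a) * h (b * log r)

theorem hardyProfile_eventuallyEq_zero_nhds (ha : a ≠ 0) (hb : 0 < b) (hh : HasCompactSupport h) :
    hardyProfile a b h =ᶠ[𝓝 0] 0 := by
  have hbot : h =ᶠ[atBot] 0 :=
    hh.eventuallyEq_zero_atBot_sup_atTop.filter_mono le_sup_left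
  rw [← nhdsNE_sup_pure, EventuallyEq, eventually_sup]
  refine ⟨((tendsto_log_nhdsNE_zero.const_mul_atBot hb).eventually hbot).mono fun r hr => ?_, ?_⟩
  · simp [hardyProfile, hr]
  · simp [hardyProfile, zero_rpow (neg_ne_zero.2 ha)]

theorem hardyProfile_eventuallyEq_zero_atTop (hb : 0 < b) (hh : HasCompactSupport h) :
    hardyProfile a b h =ᶠ[atTop] 0 := by
  have htop : h =ᶠ[atTop] 0 :=
    hh.eventuallyEq_zero_atBot_sup_atTop.filter_mono le_sup_right
  filter_upwards [(tendsto_log_atTop.const_mul_atTop hb).eventually htop] with r hr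
  simp [hardyProfile, hr]

theorem contDiffAt_hardyProfile {n : WithTop ℕ∞} {r : ℝ} (hr : r ≠ 0) (hh : ContDiff ℝ n h) :
    ContDiffAt ℝ n (hardyProfile a b h) r :=
  (contDiffAt_rpow_const_of_ne hr).mul
    (hh.contDiffAt.comp r (contDiffAt_const.mul (contDiffAt_log.2 hr)))

theorem hasDerivAt_hardyProfile {r : ℝ} (hr : 0 < r) (hh : DifferentiableAt ℝ h (b * log r)) :
    HasDerivAt (hardyProfile a b h)
      (r ^ (-a - 1) * (-a * h (b * log r) + b * deriv h (b * log r))) r := by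
  have hlog : HasDerivAt (fun r => b * log r) (b * r⁻¹) r := (hasDerivAt_log hr.ne').const_mul b
  refine ((hasDerivAt_rpow_const (p := -a) (Or.inl hr.ne')).mul
    (hh.hasDerivAt.comp r hlog)).congr_deriv ?_
  rw [rpow_sub hr, rpow_one, Function.comp_apply]
  field_simp

end Profile

theorem integral_Ioi_inv_smul_comp_mul_log {F : Type*} [NormedAddCommGroup F] [NormedSpace ℝ F]
    (W : ℝ → F) {b : ℝ} (hb : 0 < b) :
    ∫ r in Ioi 0, r⁻¹ • W (b * log r) = b⁻¹ • ∫ t, W t := by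
  rw [← range_exp, ← image_univ, integral_image_eq_integral_abs_deriv_smul MeasurableSet.univ
    (fun s _ => (hasDerivAt_exp s).hasDerivWithinAt) exp_injective.injOn, Measure.restrict_univ]
  simp only [abs_of_pos (exp_pos _), smul_smul, mul_inv_cancel₀ (exp_pos _).ne', log_exp, one_smul]
  rw [Measure.integral_comp_mul_left, abs_of_pos (inv_pos.2 hb)]

theorem pow_pred_mul_rpow_neg_sq {n : ℕ} {a r : ℝ} (hn : 1 ≤ n) (ha : 2 * a = n - 2) (hr : 0 < r) :
    r ^ (n - 1) * (r ^ (-a)) ^ 2 = r := by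
  rw [← rpow_natCast, ← rpow_natCast _ 2, ← rpow_mul hr.le, ← rpow_add hr]
  convert rpow_one r using 2
  push_cast [Nat.cast_sub hn]
  linarith

section Integrals

variable {E : Type*} [NormedAddCommGroup E] [InnerProductSpace ℝ E] [FiniteDimensional ℝ E]
  [Nontrivial E] [MeasurableSpace E] [BorelSpace E] (μ : Measure E) [μ.IsAddHaarMeasure]
  {a b : ℝ} {h : ℝ → ℝ}

theorem integral_fun_norm_addHaar_of_eq_inv_mul_comp_log (hb : 0 < b) {F W : ℝ → ℝ}
    (hFW : ∀ r > 0, r ^ (finrank ℝ E - 1) * F r = r⁻¹ * W (b * log r)) :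
    ∫ x, F ‖x‖ ∂μ = finrank ℝ E * μ.real (Metric.ball 0 1) * (b⁻¹ * ∫ t, W t) := by
  rw [integral_fun_norm_addHaar μ F, nsmul_eq_mul, smul_eq_mul, mul_assoc, ← smul_eq_mul b⁻¹,
    ← integral_Ioi_inv_smul_comp_mul_log W hb]
  congr 2
  exact setIntegral_congr_fun measurableSet_Ioi hFW

theorem integral_hardyProfile_sq_div_norm_sq (hb : 0 < b) (ha : 2 * a = finrank ℝ E - 2) :
    ∫ x, hardyProfile a b h ‖x‖ ^ 2 / ‖x‖ ^ 2 ∂μ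
      = finrank ℝ E * μ.real (Metric.ball 0 1) * (b⁻¹ * ∫ t, h t ^ 2) := by
  refine integral_fun_norm_addHaar_of_eq_inv_mul_comp_log μ hb
    (F := fun r => hardyProfile a b h r ^ 2 / r ^ 2) (W := fun t => h t ^ 2) fun r hr => ?_
  have := pow_pred_mul_rpow_neg_sq finrank_pos ha hr
  simp only [hardyProfile]
  field_simp
  linear_combination (h (b * log r)) ^ 2 * this

theorem integral_norm_fderiv_hardyProfile_sq (ha : 2 * a = finrank ℝ E - 2) (ha₀ : a ≠ 0)
    (hb : 0 < b) (hh : ContDiff ℝ 1 h) (hhc : HasCompactSupport h) :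
    ∫ x, ‖fderiv ℝ (fun x : E => hardyProfile a b h ‖x‖) x‖ ^ 2 ∂μ
      = finrank ℝ E * μ.real (Metric.ball 0 1) * (b⁻¹ * ∫ t, (-a * h t + b * deriv h t) ^ 2) := by
  simp_rw [norm_fderiv_comp_norm
    (fun r hr => (contDiffAt_hardyProfile hr.ne' hh).differentiableAt one_ne_zero)
    (hardyProfile_eventuallyEq_zero_nhds ha₀ hb hhc), sq_abs]
  refine integral_fun_norm_addHaar_of_eq_inv_mul_comp_log μ hb
    (F := fun r => deriv (hardyProfile a b h) r ^ 2) (W := fun t => (-a * h t + b * deriv h t) ^ 2)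
    fun r hr => ?_
  have := pow_pred_mul_rpow_neg_sq finrank_pos ha hr
  rw [(hasDerivAt_hardyProfile hr (hh.differentiable one_ne_zero _)).deriv, rpow_sub hr, rpow_one]
  field_simp
  linear_combination (-a * h (b * log r) + b * deriv h (b * log r)) ^ 2 * this

theorem mul_integral_norm_fderiv_hardyProfile_sq_lt (ha : 2 * a = finrank ℝ E - 2) (ha₀ : a ≠ 0)
    (hb : 0 < b) (hh : ContDiff ℝ 1 h) (hhc : HasCompactSupport h) {c : ℝ}
    (hc : c * ∫ t, (-a * h t + b * deriv h t) ^ 2 < ∫ t, h t ^ 2) :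
    c * ∫ x, ‖fderiv ℝ (fun x : E => hardyProfile a b h ‖x‖) x‖ ^ 2 ∂μ
      < ∫ x, hardyProfile a b h ‖x‖ ^ 2 / ‖x‖ ^ 2 ∂μ := by
  rw [integral_norm_fderiv_hardyProfile_sq μ ha ha₀ hb hh hhc,
    integral_hardyProfile_sq_div_norm_sq μ hb ha]
  have hball : 0 < μ.real (Metric.ball (0 : E) 1) := by
    rw [measureReal_def]
    exact ENNReal.toReal_pos (Metric.measure_ball_pos μ 0 one_pos).ne' measure_ball_lt_top.ne
  have hC : 0 < finrank ℝ E * μ.real (Metric.ball (0 : E) 1) * b⁻¹ :=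
    mul_pos (mul_pos (Nat.cast_pos.2 finrank_pos) hball) (inv_pos.2 hb)
  linarith [mul_lt_mul_of_pos_left hc hC]

end Integrals

theorem continuous_integral_add_mul_sq {u v : ℝ → ℝ} (hu : Continuous u) (hv : Continuous v)
    (hus : HasCompactSupport u) (hvs : HasCompactSupport v) :
    Continuous fun b => ∫ t, (u t + b * v t) ^ 2 := by
  have hK : ∀ b, ∫ t in tsupport u ∪ tsupport v, (u t + b * v t) ^ 2 = ∫ t, (u t + b * v t) ^ 2 :=
    fun b => setIntegral_eq_integral_of_forall_compl_eq_zero fun t ht => by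
      rw [mem_union, not_or] at ht
      simp [image_eq_zero_of_notMem_tsupport ht.1, image_eq_zero_of_notMem_tsupport ht.2]
  simp_rw [← hK]
  exact continuous_parametric_integral_of_continuous (by fun_prop) (hus.isCompact.union hvs)

theorem exists_pos_mul_integral_sq_lt {a ε : ℝ} {h : ℝ → ℝ} (ha : a ≠ 0) (hε : 0 < ε)
    (hh : ContDiff ℝ 1 h) (hhc : HasCompactSupport h) (hne : h ≠ 0) :
    ∃ b > 0, (a⁻¹ ^ 2 - ε) * ∫ t, (-a * h t + b * deriv h t) ^ 2 < ∫ t, h t ^ 2 := by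
  obtain ⟨t₀, ht₀⟩ := Function.ne_iff.1 hne
  have hsq : HasCompactSupport fun t => h t ^ 2 :=
    hhc.comp_left (g := (· ^ 2)) (zero_pow two_ne_zero)
  have hA : 0 < ∫ t, h t ^ 2 :=
    (hh.continuous.pow 2).integral_pos_of_hasCompactSupport_nonneg_nonzero hsq
      (fun t => sq_nonneg (h t)) (x := t₀) (pow_ne_zero 2 ht₀)
  have hQ : Continuous fun b => ∫ t, (-a * h t + b * deriv h t) ^ 2 :=
    continuous_integral_add_mul_sq (continuous_const.mul hh.continuous)
      (hh.continuous_deriv le_rfl) hhc.mul_left hhc.deriv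
  have h0 : (a⁻¹ ^ 2 - ε) * ∫ t, (-a * h t + 0 * deriv h t) ^ 2 < ∫ t, h t ^ 2 := by
    simp_rw [zero_mul, add_zero, mul_pow, integral_const_mul, neg_sq]
    calc (a⁻¹ ^ 2 - ε) * (a ^ 2 * ∫ t, h t ^ 2) = (∫ t, h t ^ 2) - ε * a ^ 2 * ∫ t, h t ^ 2 := by
          field_simp
      _ < ∫ t, h t ^ 2 := sub_lt_self _ (by positivity)
  obtain ⟨b, hb, hbA⟩ := (((continuous_const.mul hQ).continuousAt.eventually_lt
    continuousAt_const h0).filter_mono nhdsWithin_le_nhds |>.and self_mem_nhdsWithin).exists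
      (f := 𝓝[>] (0 : ℝ))
  exact ⟨b, hbA, hb⟩

theorem hardy_constant_optimal {E : Type*} [NormedAddCommGroup E] [InnerProductSpace ℝ E]
    [FiniteDimensional ℝ E] [MeasurableSpace E] [BorelSpace E] (μ : Measure E)
    [μ.IsAddHaarMeasure] (hE : 3 ≤ finrank ℝ E) {ε : ℝ} (hε : 0 < ε) :
    ∃ f : E → ℝ, Differentiable ℝ f ∧ HasCompactSupport f ∧ f ≠ 0 ∧ MemLp f 2 μ ∧
      MemLp (fun x => ‖fderiv ℝ f x‖) 2 μ ∧
      (4 / (finrank ℝ E - 2) ^ 2 - ε) * ∫ x, ‖fderiv ℝ f x‖ ^ 2 ∂μ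
        < ∫ x, f x ^ 2 / ‖x‖ ^ 2 ∂μ := by
  have : Nontrivial E := Module.nontrivial_of_finrank_pos (R := ℝ) (by omega)
  set a : ℝ := (finrank ℝ E - 2) / 2 with ha_def
  have ha : 2 * a = finrank ℝ E - 2 := by rw [ha_def]; ring
  have ha₀ : a ≠ 0 := by
    have : (3 : ℝ) ≤ finrank ℝ E := by exact_mod_cast hE
    rw [ha_def]; linarith
  have hconst : 4 / ((finrank ℝ E : ℝ) - 2) ^ 2 = a⁻¹ ^ 2 := by
    rw [← ha]; field_simp; ring
  let bump : ContDiffBump (0 : ℝ) := ⟨1, 2, one_pos, one_lt_two⟩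
  have hh : ContDiff ℝ 1 bump := bump.contDiff
  have hne : (bump : ℝ → ℝ) ≠ 0 := fun h0 => by
    simpa [h0] using bump.eventuallyEq_one.eq_of_nhds
  obtain ⟨b, hb, hlt⟩ := exists_pos_mul_integral_sq_lt ha₀ hε hh bump.hasCompactSupport hne
  have hf : ContDiff ℝ 1 fun x : E => hardyProfile a b bump ‖x‖ :=
    contDiff_comp_norm (fun r hr => contDiffAt_hardyProfile hr.ne' hh)
      (hardyProfile_eventuallyEq_zero_nhds ha₀ hb bump.hasCompactSupport)
  have hfc : HasCompactSupport fun x : E => hardyProfile a b bump ‖x‖ :=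
    hasCompactSupport_comp_norm (hardyProfile_eventuallyEq_zero_atTop hb bump.hasCompactSupport)
  have hlt' := hconst ▸
    mul_integral_norm_fderiv_hardyProfile_sq_lt μ ha ha₀ hb hh bump.hasCompactSupport hlt
  refine ⟨_, hf.differentiable one_ne_zero, hfc, fun h0 => ?_,
    hf.continuous.memLp_of_hasCompactSupport hfc,
    (hf.continuous_fderiv one_ne_zero).norm.memLp_of_hasCompactSupport (hfc.fderiv ℝ).norm, hlt'⟩
  simp [congrFun h0] at hlt'

/-- Optimality of the constant 4 in the three-dimensional Hardy inequality:
for every `ε > 0` there is a compactly supported, not identically zero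
`f ∈ W^{1,2}(ℝ³)` with `∫ f²/|x|² dx > (4 - ε) ∫ |∇f|² dx`. -/
theorem hardy_constant_optimal_dim3 (ε : ℝ) (hε : 0 < ε) :
    ∃ f : EuclideanSpace ℝ (Fin 3) → ℝ,
      Differentiable ℝ f ∧ HasCompactSupport f ∧ f ≠ 0 ∧
      MemLp f 2 (volume : Measure (EuclideanSpace ℝ (Fin 3))) ∧
      MemLp (fun x => ‖fderiv ℝ f x‖) 2
        (volume : Measure (EuclideanSpace ℝ (Fin 3))) ∧
      (4 - ε) * ∫ x, ‖fderiv ℝ f x‖ ^ 2 < ∫ x, f x ^ 2 / ‖x‖ ^ 2 := by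
  have h := hardy_constant_optimal (volume : Measure (EuclideanSpace ℝ (Fin 3)))
    (by rw [finrank_euclideanSpace_fin]) hε
  norm_num [finrank_euclideanSpace_fin] at h
  exact h
end

section
/- Fix d ≥ 1, p > 0, a > 0, and a smooth function α: ℝ₊ → [0,1] with α = 1 on [0,1], α = 0 on [3,∞), and −1 ≤ α' ≤ 0. Define L_a(x) = (1 − α(a^{−1}|x|))/|x|^p on ℝ^d. Then there is a constant C = p + 1 such that for all x, y, z ∈ ℝ^d, |L_a(z−x) − L_a(z−y)| ≤ C a^{−1} |x−y| ( |x−z|^{−p} 𝟙(|x−z|>a) + |y−z|^{−p} 𝟙(|y−z|>a) ). -/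
/-- Lipschitz-type estimate for the truncated kernel
`L_a(x) = (1 - α(|x|/a)) / |x|^p`: with `C = p + 1`, for all `x, y, z`,
`|L_a(z-x) - L_a(z-y)| ≤ C a⁻¹ |x-y| (|x-z|^{-p} 𝟙(|x-z|>a) + |y-z|^{-p} 𝟙(|y-z|>a))`. -/
theorem truncated_kernel_lipschitz
    (d : ℕ) (hd : 1 ≤ d) (p a : ℝ) (hp : 0 < p) (ha : 0 < a)
    (α : ℝ → ℝ) (hsmooth : ContDiff ℝ (⊤ : ℕ∞) α)
    (hα01 : ∀ l : ℝ, 0 ≤ α l ∧ α l ≤ 1)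
    (hα1 : ∀ l : ℝ, 0 ≤ l → l ≤ 1 → α l = 1)
    (hα0 : ∀ l : ℝ, 3 ≤ l → α l = 0)
    (hα' : ∀ l : ℝ, 0 ≤ l → -1 ≤ deriv α l ∧ deriv α l ≤ 0)
    (L : EuclideanSpace ℝ (Fin d) → ℝ)
    (hL : ∀ x, L x = (1 - α (a⁻¹ * ‖x‖)) / ‖x‖ ^ p) :
    ∀ x y z : EuclideanSpace ℝ (Fin d),
      |L (z - x) - L (z - y)| ≤
        (p + 1) * a⁻¹ * ‖x - y‖ *
          ((if a < ‖x - z‖ then ‖x - z‖ ^ (-p) else 0) +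
           (if a < ‖y - z‖ then ‖y - z‖ ^ (-p) else 0)) := by
  have hαdiff : Differentiable ℝ α := hsmooth.differentiable (by simp)
  -- the radial profile
  set g : ℝ → ℝ := fun r => (1 - α (a⁻¹ * r)) * r ^ (-p) with hg
  have hLg : ∀ w : EuclideanSpace ℝ (Fin d), L w = g ‖w‖ := by
    intro w
    rw [hL]
    rcases eq_or_lt_of_le (norm_nonneg w) with h0 | h0
    · have : α (a⁻¹ * ‖w‖) = 1 := by
        rw [← h0]; simpa using hα1 0 le_rfl zero_le_one
      simp [hg, this]
    · rw [hg]
      simp only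
      rw [Real.rpow_neg (norm_nonneg w), div_eq_mul_inv]
  -- g vanishes on [0, a]
  have hg0 : ∀ r : ℝ, 0 ≤ r → r ≤ a → g r = 0 := by
    intro r h0 hra
    have h1 : α (a⁻¹ * r) = 1 := by
      apply hα1
      · positivity
      · rw [inv_mul_le_iff₀ ha, mul_one]; exact hra
    simp [hg, h1]
  -- 1 - α w ≤ w - 1 for w ≥ 1
  have hαlip : ∀ w : ℝ, 1 ≤ w → 1 - α w ≤ w - 1 := by
    intro w hw
    have hmvt := Convex.norm_image_sub_le_of_norm_deriv_le (f := α) (s := Set.Ici (0:ℝ))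
      (C := 1) (fun l _ => hαdiff l) (fun l hl => by
        rw [Real.norm_eq_abs, abs_le]
        exact ⟨(hα' l hl).1, (hα' l hl).2.trans zero_le_one⟩)
      (convex_Ici 0) (Set.mem_Ici.2 zero_le_one) (Set.mem_Ici.2 (zero_le_one.trans hw))
    have h1 : α 1 = 1 := hα1 1 zero_le_one le_rfl
    rw [Real.norm_eq_abs, Real.norm_eq_abs, h1, one_mul] at hmvt
    have := (abs_le.1 hmvt).1
    have habs : |w - 1| = w - 1 := abs_of_nonneg (by linarith)
    rw [habs] at this
    linarith [neg_abs_le (α w - 1), (abs_le.1 hmvt).1]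
  -- key one-dimensional estimate
  have key : ∀ u v : ℝ, 0 ≤ v → v ≤ u →
      |g u - g v| ≤ (p + 1) * a⁻¹ * (u - v) *
        ((if a < u then u ^ (-p) else 0) + (if a < v then v ^ (-p) else 0)) := by
    intro u v hv huv
    by_cases hua : a < u
    · have hu0 : (0:ℝ) < u := ha.trans hua
      by_cases hva : a < v
      · -- both beyond a : mean value theorem on [v, u]
        have hv0 : (0:ℝ) < v := ha.trans hva
        set g' : ℝ → ℝ := fun r =>
          (-(deriv α (a⁻¹ * r) * a⁻¹)) * r ^ (-p) + (1 - α (a⁻¹ * r)) * (-p * r ^ (-p - 1))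
          with hg'
        have hder : ∀ r ∈ Set.Icc v u, HasDerivWithinAt g (g' r) (Set.Icc v u) r := by
          intro r hr
          have hr0 : (0:ℝ) < r := hv0.trans_le hr.1
          have h1 : HasDerivAt (fun r : ℝ => 1 - α (a⁻¹ * r)) (-(deriv α (a⁻¹ * r) * a⁻¹)) r := by
            have hlin : HasDerivAt (fun r : ℝ => a⁻¹ * r) a⁻¹ r := by
              simpa using (hasDerivAt_id r).const_mul a⁻¹
            exact ((hαdiff (a⁻¹ * r)).hasDerivAt.comp r hlin).const_sub 1
          have h2 : HasDerivAt (fun r : ℝ => r ^ (-p)) (-p * r ^ (-p - 1)) r :=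
            Real.hasDerivAt_rpow_const (Or.inl hr0.ne')
          convert (h1.mul h2).hasDerivWithinAt using 1 <;> rfl
        have hbound : ∀ r ∈ Set.Icc v u, ‖g' r‖ ≤ (p + 1) * a⁻¹ * v ^ (-p) := by
          intro r hr
          have hr0 : (0:ℝ) < r := hv0.trans_le hr.1
          have hra : a ≤ r := (hva.le.trans hr.1)
          have hw : (0:ℝ) ≤ a⁻¹ * r := by positivity
          have hd1 : |deriv α (a⁻¹ * r)| ≤ 1 := by
            rw [abs_le]; exact ⟨(hα' _ hw).1, (hα' _ hw).2.trans zero_le_one⟩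
          have hα2 : 0 ≤ 1 - α (a⁻¹ * r) ∧ 1 - α (a⁻¹ * r) ≤ 1 := by
            have := hα01 (a⁻¹ * r); constructor <;> linarith [this.1, this.2]
          have hrpow : r ^ (-p) ≤ v ^ (-p) :=
            Real.rpow_le_rpow_of_nonpos hv0 hr.1 (neg_nonpos.2 hp.le)
          have hrpow0 : (0:ℝ) ≤ r ^ (-p) := Real.rpow_nonneg hr0.le _
          have hsplit : r ^ (-p - 1) = r ^ (-p) * r⁻¹ := by
            rw [show -p - 1 = -p + (-1) by ring, Real.rpow_add hr0, Real.rpow_neg_one]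
          have hinv : r⁻¹ ≤ a⁻¹ := inv_anti₀ ha hra
          calc ‖g' r‖ ≤ |(-(deriv α (a⁻¹ * r) * a⁻¹)) * r ^ (-p)|
                + |(1 - α (a⁻¹ * r)) * (-p * r ^ (-p - 1))| := by
                rw [hg', Real.norm_eq_abs]; exact abs_add_le _ _
            _ ≤ 1 * a⁻¹ * r ^ (-p) + 1 * (p * (r ^ (-p) * a⁻¹)) := by
                have e1 : |(-(deriv α (a⁻¹ * r) * a⁻¹)) * r ^ (-p)| ≤ 1 * a⁻¹ * r ^ (-p) := by
                  rw [abs_mul, abs_neg, abs_mul, abs_of_nonneg (inv_pos.2 ha).le,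
                    abs_of_nonneg hrpow0]
                  exact mul_le_mul_of_nonneg_right
                    (mul_le_mul_of_nonneg_right hd1 (inv_pos.2 ha).le) hrpow0
                have e2 : |(1 - α (a⁻¹ * r)) * (-p * r ^ (-p - 1))| ≤
                    1 * (p * (r ^ (-p) * a⁻¹)) := by
                  rw [abs_mul, abs_mul, abs_neg, abs_of_nonneg hα2.1, abs_of_nonneg hp.le,
                    abs_of_nonneg (Real.rpow_nonneg hr0.le _), hsplit]
                  have h3 : r ^ (-p) * r⁻¹ ≤ r ^ (-p) * a⁻¹ :=
                    mul_le_mul_of_nonneg_left hinv hrpow0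
                  calc (1 - α (a⁻¹ * r)) * (p * (r ^ (-p) * r⁻¹))
                      ≤ 1 * (p * (r ^ (-p) * r⁻¹)) := by
                        apply mul_le_mul_of_nonneg_right hα2.2; positivity
                    _ ≤ 1 * (p * (r ^ (-p) * a⁻¹)) := by
                        rw [one_mul, one_mul]; exact mul_le_mul_of_nonneg_left h3 hp.le
                linarith
            _ = (p + 1) * a⁻¹ * r ^ (-p) := by ring
            _ ≤ (p + 1) * a⁻¹ * v ^ (-p) :=
                mul_le_mul_of_nonneg_left hrpow (by positivity)
        have hmvt := Convex.norm_image_sub_le_of_norm_hasDerivWithin_le hder hbound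
          (convex_Icc v u) (Set.mem_Icc.2 ⟨le_rfl, huv⟩) (Set.mem_Icc.2 ⟨huv, le_rfl⟩)
        rw [Real.norm_eq_abs, Real.norm_eq_abs, abs_of_nonneg (by linarith : (0:ℝ) ≤ u - v)]
          at hmvt
        calc |g u - g v| ≤ (p + 1) * a⁻¹ * v ^ (-p) * (u - v) := hmvt
          _ = (p + 1) * a⁻¹ * (u - v) * (v ^ (-p) + 0) := by ring
          _ ≤ (p + 1) * a⁻¹ * (u - v) *
              ((if a < u then u ^ (-p) else 0) + (if a < v then v ^ (-p) else 0)) := by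
              rw [if_pos hua, if_pos hva]
              have huv0 : (0:ℝ) ≤ u - v := by linarith
              have hsum : v ^ (-p) + 0 ≤ u ^ (-p) + v ^ (-p) := by
                have := Real.rpow_nonneg hu0.le (-p); linarith
              exact mul_le_mul_of_nonneg_left hsum
                (mul_nonneg (by positivity) huv0)
      · -- v ≤ a < u
        push_neg at hva
        have hgv : g v = 0 := hg0 v hv hva
        have hw1 : (1:ℝ) ≤ a⁻¹ * u := by
          rw [le_inv_mul_iff₀ ha, mul_one]; exact hua.le
        have hαb : 1 - α (a⁻¹ * u) ≤ a⁻¹ * u - 1 := hαlip _ hw1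
        have hupow : (0:ℝ) ≤ u ^ (-p) := Real.rpow_nonneg hu0.le _
        have hgu : |g u| ≤ a⁻¹ * (u - v) * u ^ (-p) := by
          rw [hg]
          simp only
          rw [abs_mul, abs_of_nonneg hupow]
          have hα2 : 0 ≤ 1 - α (a⁻¹ * u) := by linarith [(hα01 (a⁻¹ * u)).2]
          rw [abs_of_nonneg hα2]
          gcongr
          calc 1 - α (a⁻¹ * u) ≤ a⁻¹ * u - 1 := hαb
            _ = a⁻¹ * (u - a) := by field_simp
            _ ≤ a⁻¹ * (u - v) := by gcongr
        calc |g u - g v| = |g u| := by rw [hgv, sub_zero]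
          _ ≤ a⁻¹ * (u - v) * u ^ (-p) := hgu
          _ ≤ (p + 1) * a⁻¹ * (u - v) *
              ((if a < u then u ^ (-p) else 0) + (if a < v then v ^ (-p) else 0)) := by
              rw [if_pos hua, if_neg (not_lt.2 hva), add_zero]
              have h1 : a⁻¹ * (u - v) * u ^ (-p) ≤ (p+1) * (a⁻¹ * (u - v) * u ^ (-p)) := by
                nlinarith [mul_nonneg (mul_nonneg (inv_pos.2 ha).le (by linarith : (0:ℝ) ≤ u - v)) hupow]
              linarith [h1]
    · -- u ≤ a : everything vanishes
      push_neg at hua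
      have h1 : g u = 0 := hg0 u (hv.trans huv) hua
      have h2 : g v = 0 := hg0 v hv (huv.trans hua)
      rw [h1, h2, if_neg (not_lt.2 hua), if_neg (not_lt.2 (huv.trans hua))]
      simp
  -- assemble
  intro x y z
  rw [hLg, hLg, norm_sub_rev z x, norm_sub_rev z y]
  set u := ‖x - z‖
  set v := ‖y - z‖
  have huv : |u - v| ≤ ‖x - y‖ := by
    have := abs_norm_sub_norm_le (x - z) (y - z)
    simpa [u, v] using this.trans_eq (by rw [sub_sub_sub_cancel_right])
  have hind : (0:ℝ) ≤ (if a < u then u ^ (-p) else 0) + (if a < v then v ^ (-p) else 0) := by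
    have h1 : (0:ℝ) ≤ (if a < u then u ^ (-p) else 0) := by
      split <;> [exact Real.rpow_nonneg (norm_nonneg _) _; exact le_rfl]
    have h2 : (0:ℝ) ≤ (if a < v then v ^ (-p) else 0) := by
      split <;> [exact Real.rpow_nonneg (norm_nonneg _) _; exact le_rfl]
    linarith
  have hC : (0:ℝ) ≤ (p + 1) * a⁻¹ := by positivity
  rcases le_total v u with h | h
  · calc |g u - g v| ≤ (p + 1) * a⁻¹ * (u - v) *
        ((if a < u then u ^ (-p) else 0) + (if a < v then v ^ (-p) else 0)) :=
        key u v (norm_nonneg _) h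
      _ ≤ (p + 1) * a⁻¹ * ‖x - y‖ *
        ((if a < u then u ^ (-p) else 0) + (if a < v then v ^ (-p) else 0)) := by
        gcongr
        calc u - v ≤ |u - v| := le_abs_self _
          _ ≤ ‖x - y‖ := huv
  · rw [abs_sub_comm]
    calc |g v - g u| ≤ (p + 1) * a⁻¹ * (v - u) *
        ((if a < v then v ^ (-p) else 0) + (if a < u then u ^ (-p) else 0)) :=
        key v u (norm_nonneg _) h
      _ ≤ (p + 1) * a⁻¹ * ‖x - y‖ *
        ((if a < u then u ^ (-p) else 0) + (if a < v then v ^ (-p) else 0)) := by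
        rw [add_comm (if a < v then v ^ (-p) else 0)]
        gcongr
        calc v - u ≤ |v - u| := le_abs_self _
          _ = |u - v| := abs_sub_comm v u
          _ ≤ ‖x - y‖ := huv
end

section
/- Let X = (X₁,…,Xₙ) be a random vector whose components are associated, i.e., Cov(f(X), g(X)) ≥ 0 for all bounded measurable coordinatewise non-decreasing f, g: ℝⁿ → ℝ. Then for all reals c₁,…,cₙ: ℙ(X₁ ≥ c₁,…, Xₙ ≥ cₙ) ≥ ∏_{j=1}^n ℙ(X_j ≥ c_j). -/
/-!
Indicators of measurable upper sets are bounded, measurable and monotone, so association applied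
to two of them gives `P(X ∈ A) P(X ∈ B) ≤ P(X ∈ A ∩ B)` for measurable upper sets `A`, `B`.
The half-spaces `{x | cⱼ ≤ xⱼ}` are upper sets and so is every intersection of them, hence
peeling off one coordinate at a time turns the product of the marginals into the probability of
the orthant.
-/

open MeasureTheory Set

section Association

variable {Ω α : Type*} [MeasurableSpace Ω] [MeasurableSpace α] [Preorder α]

def IsAssociated (X : Ω → α) (P : Measure Ω) : Prop :=
  ∀ f g : α → ℝ, Measurable f → Measurable g →
    (∃ C : ℝ, ∀ x, |f x| ≤ C) → (∃ C : ℝ, ∀ x, |g x| ≤ C) →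
    Monotone f → Monotone g →
    0 ≤ (∫ ω, f (X ω) * g (X ω) ∂P) - (∫ ω, f (X ω) ∂P) * (∫ ω, g (X ω) ∂P)

omit [MeasurableSpace α] in
lemma IsUpperSet.monotone_indicator_one {M : Type*} [Zero M] [One M] [Preorder M]
    [ZeroLEOneClass M] {s : Set α} (hs : IsUpperSet s) : Monotone (s.indicator (1 : α → M)) := by
  intro x y hxy
  by_cases hx : x ∈ s
  · simp [hx, hs hxy hx]
  · simp only [indicator_of_notMem hx]
    exact indicator_nonneg (fun _ _ => zero_le_one) y

omit [MeasurableSpace α] [Preorder α] in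
lemma abs_indicator_one_le_one (s : Set α) (x : α) : |s.indicator (1 : α → ℝ) x| ≤ 1 := by
  by_cases hx : x ∈ s <;> simp [hx]

namespace IsAssociated

variable {X : Ω → α} {P : Measure Ω}

theorem measureReal_mul_le_inter (hassoc : IsAssociated X P) (hX : Measurable X)
    {s t : Set α} (hs : MeasurableSet s) (ht : MeasurableSet t)
    (hs_upper : IsUpperSet s) (ht_upper : IsUpperSet t) :
    P.real (X ⁻¹' s) * P.real (X ⁻¹' t) ≤ P.real (X ⁻¹' (s ∩ t)) := by
  have hcov := hassoc (s.indicator 1) (t.indicator 1)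
    (measurable_const.indicator hs) (measurable_const.indicator ht)
    ⟨1, abs_indicator_one_le_one s⟩ ⟨1, abs_indicator_one_le_one t⟩
    hs_upper.monotone_indicator_one ht_upper.monotone_indicator_one
  have hint : ∀ u : Set α, MeasurableSet u →
      ∫ ω, u.indicator 1 (X ω) ∂P = P.real (X ⁻¹' u) := fun u hu => by
    rw [← integral_indicator_one (hX hu)]
    rfl
  have hprod : ∀ x, s.indicator 1 x * t.indicator 1 x = (s ∩ t).indicator (1 : α → ℝ) x :=
    fun x => by rw [inter_indicator_one]; rfl
  simp only [hprod] at hcov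
  rwa [sub_nonneg, hint s hs, hint t ht, hint _ (hs.inter ht)] at hcov

theorem prod_measureReal_le_biInter [IsProbabilityMeasure P] (hassoc : IsAssociated X P)
    (hX : Measurable X) {ι : Type*} {A : ι → Set α} (hA : ∀ i, MeasurableSet (A i))
    (hA_upper : ∀ i, IsUpperSet (A i)) (s : Finset ι) :
    ∏ i ∈ s, P.real (X ⁻¹' A i) ≤ P.real (X ⁻¹' ⋂ i ∈ s, A i) := by
  classical
  induction s using Finset.induction_on with
  | empty => simp
  | @insert a s has ih =>
    rw [Finset.prod_insert has, Finset.set_biInter_insert]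
    calc P.real (X ⁻¹' A a) * ∏ i ∈ s, P.real (X ⁻¹' A i)
        ≤ P.real (X ⁻¹' A a) * P.real (X ⁻¹' ⋂ i ∈ s, A i) := by gcongr
      _ ≤ P.real (X ⁻¹' (A a ∩ ⋂ i ∈ s, A i)) :=
        hassoc.measureReal_mul_le_inter hX (hA a) (s.measurableSet_biInter fun i _ => hA i)
          (hA_upper a) (isUpperSet_iInter₂ fun i _ => hA_upper i)

end IsAssociated

end Association

/-- If the components of a random vector `X = (X₁, …, Xₙ)` are associated, i.e.
`Cov(f(X), g(X)) ≥ 0` for all bounded measurable coordinatewise non-decreasing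
`f, g`, then `ℙ(X₁ ≥ c₁, …, Xₙ ≥ cₙ) ≥ ∏ⱼ ℙ(Xⱼ ≥ cⱼ)`. -/
theorem associated_lower_orthant_inequality
    {Ω : Type*} [MeasurableSpace Ω] (P : Measure Ω) [IsProbabilityMeasure P]
    (n : ℕ) (X : Ω → (Fin n → ℝ)) (hX : Measurable X)
    (hassoc : ∀ f g : (Fin n → ℝ) → ℝ, Measurable f → Measurable g →
      (∃ C : ℝ, ∀ x, |f x| ≤ C) → (∃ C : ℝ, ∀ x, |g x| ≤ C) →
      Monotone f → Monotone g →
      0 ≤ (∫ ω, f (X ω) * g (X ω) ∂P) - (∫ ω, f (X ω) ∂P) * (∫ ω, g (X ω) ∂P))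
    (c : Fin n → ℝ) :
    (∏ j : Fin n, P {ω | c j ≤ X ω j}) ≤ P {ω | ∀ j : Fin n, c j ≤ X ω j} := by
  have h := IsAssociated.prod_measureReal_le_biInter hassoc hX (A := fun j => {x | c j ≤ x j})
    (fun j => measurableSet_le measurable_const (measurable_pi_apply j))
    (fun j _ _ hxy hx => hx.trans (hxy j)) Finset.univ
  rw [← ENNReal.toReal_le_toReal (ENNReal.prod_ne_top fun j _ => measure_ne_top P _)
    (measure_ne_top _ _), ENNReal.toReal_prod]
  simpa [measureReal_def, preimage_iInter, ofPred_forall] using h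
end

section
/- Let ω be a Poisson point process on ℝ³ with Lebesgue intensity. Fix δ > 0, r > 0, and set ε_n = 2^{−3n}, R_n = δ 2^{2n}. For z ranging over the lattice points 2rℤ³ ∩ B(0, R_n − r), the counts ω(B(2^{−n}z, 2^{−n}δ)) are i.i.d. Poisson with mean (4/3)π(2^{−n}δ)³. Then almost surely, limsup_{n→∞} max_{z ∈ 2rℤ³ ∩ B(0, δ2^{2n} − r)} ω(B(2^{−n}z, 2^{−n}δ)) = 2. -/
/-!
Each ball `B(2⁻ⁿz, 2⁻ⁿδ)` holds a Poisson number of points with mean `λₙ = (4π/3)(δ/2ⁿ)³ ≍ 8⁻ⁿ`,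
and there are `≍ 64ⁿ` admissible lattice points `z`.

Upper bound: a ball holds at least three points with probability at most `λₙ³/6`, so the expected
number of such balls at scale `n` is `O(64ⁿ · 8⁻³ⁿ) = O(8⁻ⁿ)`, which is summable (Borel–Cantelli).

Lower bound: at the scales `n₀ + 2j` take `≍ 64ⁿ` lattice points, spaced so that their balls are
disjoint, and confined to a slab `x₀ ≍ δ2ⁿ`, so that the slabs of different scales are disjoint too.
A ball holds exactly two points with probability `≍ λₙ² ≍ 64⁻ⁿ`, so by independence no ball of the
scales `j ∈ [J, J + k)` holds exactly two points with probability at most `e^{-γk}` for a fixed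
`γ > 0`. Letting `k → ∞`, almost surely infinitely many scales have such a ball.
-/

open MeasureTheory ProbabilityTheory Filter
open scoped ENNReal

/-- The maximal Poisson count over the lattice points `z ∈ 2rℤ³ ∩ B(0, δ2^{2n} - r)`
of the number of points in the ball `B(2^{-n} z, 2^{-n} δ)`. -/
noncomputable def maxLatticeCount {Ω : Type*}
    (N : Ω → Set (EuclideanSpace ℝ (Fin 3)) → ℕ) (r δ : ℝ) (n : ℕ) (ω : Ω) : ℕ :=
  sSup {k : ℕ | ∃ m : Fin 3 → ℤ,
    ‖((EuclideanSpace.equiv (Fin 3) ℝ).symm (fun i => 2 * r * (m i : ℝ)))‖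
        < δ * 2 ^ (2 * n) - r ∧
    k = N ω (Metric.ball
      ((2 : ℝ) ^ (-(n : ℤ)) •
        ((EuclideanSpace.equiv (Fin 3) ℝ).symm (fun i => 2 * r * (m i : ℝ))))
      ((2 : ℝ) ^ (-(n : ℤ)) * δ))}

open scoped NNReal Nat
open Real Metric

local notation "ℝ³" => EuclideanSpace ℝ (Fin 3)

lemma poissonMeasure_Ici_three_le (t : ℝ≥0) :
    poissonMeasure t (Set.Ici 3) ≤ ENNReal.ofReal (t ^ 3 / 6) := by
  have hfac (j : ℕ) : 6 * (j ! : ℝ) ≤ (j + 3)! := by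
    have := Nat.le_of_dvd (Nat.factorial_pos _) (Nat.factorial_mul_factorial_dvd_factorial_add 3 j)
    rw [add_comm 3 j] at this
    exact_mod_cast this
  calc poissonMeasure t (Set.Ici 3) = poissonMeasure t (⋃ j : ℕ, {j + 3}) := by
        congr 1; ext k; simp only [Set.mem_Ici, Set.mem_iUnion, Set.mem_singleton_iff]
        exact ⟨fun h => ⟨k - 3, by omega⟩, by rintro ⟨j, rfl⟩; omega⟩
    _ ≤ ∑' j : ℕ, poissonMeasure t {j + 3} := measure_iUnion_le _
    _ ≤ ∑' j : ℕ, ENNReal.ofReal (t ^ 3 / 6) * poissonMeasure t {j} := by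
        refine ENNReal.tsum_le_tsum fun j => ?_
        rw [poissonMeasure_singleton, poissonMeasure_singleton,
          ← ENNReal.ofReal_mul (by positivity)]
        refine ENNReal.ofReal_le_ofReal ?_
        rw [mul_div_assoc', div_le_div_iff₀ (by positivity) (by positivity)]
        calc _ = (exp (-t) * t ^ 3 * t ^ j / 6) * (6 * j !) := by ring
          _ ≤ (exp (-t) * t ^ 3 * t ^ j / 6) * (j + 3)! := by gcongr; exact hfac j
          _ = _ := by ring
    _ = ENNReal.ofReal (t ^ 3 / 6) := by
        rw [ENNReal.tsum_mul_left, ← measure_iUnion (fun i j h => Set.disjoint_singleton.2 h)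
          (fun i => measurableSet_singleton i), Set.iUnion_singleton_eq_range, Set.range_id',
          measure_univ, mul_one]

lemma poissonMeasure_compl_two_le (t : ℝ≥0) :
    poissonMeasure t {2}ᶜ ≤ ENNReal.ofReal (exp (-(exp (-t) * t ^ 2 / 2))) := by
  rw [prob_compl_eq_one_sub (measurableSet_singleton 2), poissonMeasure_singleton,
    ← ENNReal.ofReal_one, ← ENNReal.ofReal_sub _ (by positivity)]
  refine ENNReal.ofReal_le_ofReal ?_
  have := add_one_le_exp (-(exp (-t) * t ^ 2 / 2))
  norm_num at this ⊢
  linarith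

lemma prod_poissonMeasure_compl_two_le {κ : Type*} (I : Finset κ) (t : κ → ℝ≥0) :
    ∏ i ∈ I, poissonMeasure (t i) {2}ᶜ
      ≤ ENNReal.ofReal (exp (-∑ i ∈ I, exp (-t i) * t i ^ 2 / 2)) := by
  rw [← Finset.sum_neg_distrib, exp_sum, ENNReal.ofReal_prod_of_nonneg fun _ _ => (exp_pos _).le]
  exact Finset.prod_le_prod' fun i _ => poissonMeasure_compl_two_le (t i)

lemma measure_preimage_le_poissonMeasure {Ω : Type*} [MeasurableSpace Ω] {P : Measure Ω}
    {X : Ω → ℕ} {t : ℝ≥0} (hX : ∀ k, P {ω | X ω = k} = poissonMeasure t {k}) (S : Set ℕ) :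
    P (X ⁻¹' S) ≤ poissonMeasure t S := by
  calc P (X ⁻¹' S) = P (⋃ k ∈ S, {ω | X ω = k}) := by
        rw [← Set.biUnion_preimage_singleton]; rfl
    _ ≤ ∑' k : S, P {ω | X ω = k} := measure_biUnion_le P S.to_countable _
    _ = poissonMeasure t S := by
        simp_rw [hX]
        simpa using tsum_measure_preimage_singleton (μ := poissonMeasure t) S.to_countable
          (f := id) (fun _ _ => measurableSet_singleton _)

lemma ae_frequently_of_measure_iInter_compl_le {Ω : Type*} [MeasurableSpace Ω] {μ : Measure Ω}
    {s : ℕ → Set Ω} {q : ℝ≥0∞} (hq : q < 1)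
    (h : ∀ J k, μ (⋂ j ∈ Finset.Ico J (J + k), (s j)ᶜ) ≤ q ^ k) :
    ∀ᵐ ω ∂μ, ∃ᶠ j in atTop, ω ∈ s j := by
  have hnull (J : ℕ) : μ (⋂ j ≥ J, (s j)ᶜ) = 0 := by
    refine le_antisymm (ge_of_tendsto' (ENNReal.tendsto_pow_atTop_nhds_zero_of_lt_one hq)
      fun k => (measure_mono ?_).trans (h J k)) zero_le
    exact Set.biInter_mono (fun j hj => (Finset.mem_Ico.1 hj).1) fun _ _ => le_rfl
  refine measure_mono_null (fun ω hω => ?_) (measure_iUnion_null hnull)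
  simpa [Filter.frequently_atTop] using hω

lemma norm_le_two_mul_of_forall_abs_apply_le {x : ℝ³} {M : ℝ} (h : ∀ i, |x i| ≤ M) :
    ‖x‖ ≤ 2 * M := by
  have hM : 0 ≤ M := (abs_nonneg _).trans (h 0)
  rw [EuclideanSpace.norm_eq, Real.sqrt_le_left (by positivity)]
  simp only [Real.norm_eq_abs, sq_abs, Fin.sum_univ_three]
  nlinarith [sq_abs (x 0), sq_abs (x 1), sq_abs (x 2), abs_nonneg (x 0), abs_nonneg (x 1),
    abs_nonneg (x 2), h 0, h 1, h 2]

noncomputable def latticePoint (r : ℝ) (m : Fin 3 → ℤ) : ℝ³ :=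
  (EuclideanSpace.equiv (Fin 3) ℝ).symm fun i => 2 * r * (m i : ℝ)

noncomputable def latticeBall (r δ : ℝ) (n : ℕ) (m : Fin 3 → ℤ) : Set ℝ³ :=
  ball ((2 : ℝ) ^ (-(n : ℤ)) • latticePoint r m) ((2 : ℝ) ^ (-(n : ℤ)) * δ)

variable {r δ : ℝ}

lemma latticePoint_apply (r : ℝ) (m : Fin 3 → ℤ) (i : Fin 3) :
    latticePoint r m i = 2 * r * m i := rfl

lemma measurableSet_latticeBall (n : ℕ) (m : Fin 3 → ℤ) :
    MeasurableSet (latticeBall r δ n m) :=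
  measurableSet_ball

lemma volume_latticeBall_lt_top (n : ℕ) (m : Fin 3 → ℤ) : volume (latticeBall r δ n m) < ⊤ :=
  measure_ball_lt_top

lemma volume_latticeBall_toReal (hδ : 0 ≤ δ) (n : ℕ) (m : Fin 3 → ℤ) :
    (volume (latticeBall r δ n m)).toReal = π * 4 / 3 * (δ / 2 ^ n) ^ 3 := by
  rw [latticeBall, EuclideanSpace.volume_ball_fin_three, ENNReal.toReal_mul, ENNReal.toReal_pow,
    ENNReal.toReal_ofReal (by positivity), ENNReal.toReal_ofReal (by positivity), zpow_neg,
    zpow_natCast]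
  ring

lemma abs_two_pow_mul_apply_sub_lt {n : ℕ} {m : Fin 3 → ℤ} {x : ℝ³}
    (hx : x ∈ latticeBall r δ n m) (i : Fin 3) : |2 ^ n * x i - 2 * r * m i| < δ := by
  have hdist := (PiLp.dist_apply_le x _ i).trans_lt (mem_ball.mp hx)
  have h2n : (0 : ℝ) < 2 ^ n := by positivity
  rw [Real.dist_eq, zpow_neg, zpow_natCast, PiLp.smul_apply, latticePoint_apply,
    smul_eq_mul] at hdist
  calc |2 ^ n * x i - 2 * r * m i| = 2 ^ n * |x i - (2 ^ n)⁻¹ * (2 * r * m i)| := by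
        rw [← abs_of_pos h2n, ← abs_mul, abs_of_pos h2n, mul_sub, mul_inv_cancel_left₀ h2n.ne']
    _ < 2 ^ n * ((2 ^ n)⁻¹ * δ) := by gcongr
    _ = δ := mul_inv_cancel_left₀ h2n.ne' δ

lemma disjoint_latticeBall_of_le_abs_sub {n : ℕ} {m m' : Fin 3 → ℤ} (i : Fin 3)
    (h : δ ≤ r * |(m i : ℝ) - m' i|) : Disjoint (latticeBall r δ n m) (latticeBall r δ n m') := by
  refine Set.disjoint_left.2 fun x hx hx' => ?_
  have h1 := abs_two_pow_mul_apply_sub_lt hx i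
  have h2 := abs_two_pow_mul_apply_sub_lt hx' i
  have h3 : r * |(m i : ℝ) - m' i| ≤ |r * ((m i : ℝ) - m' i)| := by
    rw [abs_mul]; exact mul_le_mul_of_nonneg_right (le_abs_self r) (abs_nonneg _)
  rw [abs_lt] at h1 h2
  cases abs_cases (r * ((m i : ℝ) - m' i)) <;> nlinarith

lemma disjoint_latticeBall_of_div_le {n n' : ℕ} {m m' : Fin 3 → ℤ}
    (h : (2 * r * m 0 + δ) / 2 ^ n ≤ (2 * r * m' 0 - δ) / 2 ^ n') :
    Disjoint (latticeBall r δ n m) (latticeBall r δ n' m') := by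
  refine Set.disjoint_left.2 fun x hx hx' => ?_
  have h1 := (abs_lt.1 (abs_two_pow_mul_apply_sub_lt hx 0)).2
  have h2 := (abs_lt.1 (abs_two_pow_mul_apply_sub_lt hx' 0)).1
  have h3 : x 0 < (2 * r * m 0 + δ) / 2 ^ n := by rw [lt_div_iff₀' (by positivity)]; linarith
  have h4 : (2 * r * m' 0 - δ) / 2 ^ n' < x 0 := by rw [div_lt_iff₀' (by positivity)]; linarith
  linarith

section MaxLatticeCount

noncomputable def latticeCube (K : ℕ) : Finset (Fin 3 → ℤ) :=
  Fintype.piFinset fun _ => Finset.Icc (-(K : ℤ)) K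

lemma card_latticeCube (K : ℕ) : (latticeCube K).card = (2 * K + 1) ^ 3 := by
  simp [latticeCube, Fintype.card_piFinset]
  omega

lemma mem_latticeCube_of_norm_lt (hr : 0 < r) {R : ℝ} {m : Fin 3 → ℤ}
    (h : ‖latticePoint r m‖ < R) : m ∈ latticeCube ⌈R / (2 * r)⌉₊ := by
  simp only [latticeCube, Fintype.mem_piFinset, Finset.mem_Icc, ← abs_le]
  intro i
  have hi : |2 * r * (m i : ℝ)| < R := (PiLp.norm_apply_le (latticePoint r m) i).trans_lt h
  rw [abs_mul, abs_of_pos (by positivity : (0 : ℝ) < 2 * r), ← lt_div_iff₀' (by positivity)] at hi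
  exact_mod_cast hi.le.trans (Nat.le_ceil _)

variable {Ω : Type*} {N : Ω → Set ℝ³ → ℕ} {n : ℕ} {ω : Ω}

lemma maxLatticeCount_le {k : ℕ}
    (h : ∀ m, ‖latticePoint r m‖ < δ * 2 ^ (2 * n) - r → N ω (latticeBall r δ n m) ≤ k) :
    maxLatticeCount N r δ n ω ≤ k :=
  csSup_le' <| by rintro _ ⟨m, hm, rfl⟩; exact h m hm

lemma le_maxLatticeCount (hr : 0 < r) {m : Fin 3 → ℤ}
    (hm : ‖latticePoint r m‖ < δ * 2 ^ (2 * n) - r) :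
    N ω (latticeBall r δ n m) ≤ maxLatticeCount N r δ n ω := by
  refine le_csSup ?_ ⟨m, hm, rfl⟩
  refine ⟨(latticeCube ⌈δ * 2 ^ (2 * n) / (2 * r)⌉₊).sup fun m => N ω (latticeBall r δ n m), ?_⟩
  rintro _ ⟨m', hm', rfl⟩
  exact Finset.le_sup (f := fun m => N ω (latticeBall r δ n m))
    (mem_latticeCube_of_norm_lt hr (hm'.trans_le (by linarith)))

end MaxLatticeCount

lemma latticeCube_tail_bound_le_geometric (hδ : 0 < δ) (hr : 0 < r) {c : ℝ} (hc : 0 ≤ c) (n : ℕ) :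
    ((2 * ⌈δ * 2 ^ (2 * n) / (2 * r)⌉₊ + 1 : ℕ) : ℝ) ^ 3 * (c * (δ / 2 ^ n) ^ 3) ^ 3 / 6
      ≤ (δ / r + 3) ^ 3 * (c * δ ^ 3) ^ 3 / 6 * (1 / 8) ^ n := by
  set x : ℝ := 2 ^ n with hx
  have hx1 : 1 ≤ x := one_le_pow₀ one_le_two
  have h2n : (2 : ℝ) ^ (2 * n) = x ^ 2 := by rw [pow_mul']
  have h8 : (1 / 8 : ℝ) ^ n = (x ^ 3)⁻¹ := by
    rw [one_div, inv_pow, hx, ← pow_mul, mul_comm, pow_mul]; norm_num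
  have hceil := Nat.ceil_lt_add_one (by positivity : 0 ≤ δ * 2 ^ (2 * n) / (2 * r))
  rw [h2n] at hceil ⊢
  have hside : ((2 * ⌈δ * x ^ 2 / (2 * r)⌉₊ + 1 : ℕ) : ℝ) ≤ (δ / r + 3) * x ^ 2 := by
    have : δ * x ^ 2 / (2 * r) * 2 = δ / r * x ^ 2 := by field_simp
    push_cast; nlinarith
  calc _ ≤ ((δ / r + 3) * x ^ 2) ^ 3 * (c * (δ / x) ^ 3) ^ 3 / 6 := by gcongr
    _ = _ := by rw [h8]; field_simp

section SparseFamily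

noncomputable def sparseBox (K : ℕ) : Finset (Fin 3 → ℤ) :=
  Fintype.piFinset fun _ => Finset.Icc (K : ℤ) (2 * K)

/-- With this side length the points `s • a`, `a ∈ sparseBox (sparseSide r δ s n)`, have norm at
most `δ4ⁿ/2` and first coordinate in `[δ4ⁿ/8 - 2rs, δ4ⁿ/4]`; after scaling by `2⁻ⁿ` the balls of
scale `n` lie in the slab `x₀ ∈ [δ2ⁿ/8 - O(1), δ2ⁿ/4 + O(1)]`. -/
noncomputable def sparseSide (r δ : ℝ) (s n : ℕ) : ℕ :=
  ⌊δ * 2 ^ (2 * n) / (16 * r * s)⌋₊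

variable {s : ℕ}

lemma card_sparseBox (K : ℕ) : (sparseBox K).card = (K + 1) ^ 3 := by
  simp [sparseBox, Fintype.card_piFinset]
  omega

lemma mem_sparseBox {K : ℕ} {a : Fin 3 → ℤ} :
    a ∈ sparseBox K ↔ ∀ i, (K : ℝ) ≤ a i ∧ (a i : ℝ) ≤ 2 * K := by
  simp only [sparseBox, Fintype.mem_piFinset, Finset.mem_Icc]
  exact_mod_cast Iff.rfl

lemma latticePoint_smul_apply (r : ℝ) (s : ℕ) (a : Fin 3 → ℤ) (i : Fin 3) :
    latticePoint r ((s : ℤ) • a) i = 2 * r * s * a i := by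
  simp [latticePoint_apply]; ring

lemma norm_latticePoint_smul_le (hr : 0 ≤ r) {K : ℕ} {a : Fin 3 → ℤ} (ha : a ∈ sparseBox K) :
    ‖latticePoint r ((s : ℤ) • a)‖ ≤ 8 * r * s * K := by
  have hle : ∀ i, |latticePoint r ((s : ℤ) • a) i| ≤ 4 * r * s * K := fun i => by
    obtain ⟨h1, h2⟩ := mem_sparseBox.1 ha i
    have ha0 : (0 : ℝ) ≤ a i := K.cast_nonneg.trans h1
    rw [latticePoint_smul_apply, abs_of_nonneg (by positivity)]
    calc 2 * r * s * a i ≤ 2 * r * s * (2 * K) := by gcongr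
      _ = 4 * r * s * K := by ring
  linarith [norm_le_two_mul_of_forall_abs_apply_le hle]

lemma pairwise_disjoint_latticeBall_smul (hr : 0 < r) (hs : δ ≤ r * s) (n : ℕ) :
    Pairwise (Function.onFun Disjoint fun a => latticeBall r δ n ((s : ℤ) • a)) := by
  intro a b hab
  obtain ⟨i, hi⟩ := Function.ne_iff.1 hab
  refine disjoint_latticeBall_of_le_abs_sub i ?_
  have h1 : (1 : ℝ) ≤ |(a i : ℝ) - b i| := by
    exact_mod_cast Int.one_le_abs (sub_ne_zero.2 hi)
  calc δ ≤ r * s * 1 := by linarith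
    _ ≤ r * s * |(a i : ℝ) - b i| := by gcongr
    _ = r * |(((s : ℤ) • a) i : ℝ) - ((s : ℤ) • b) i| := by
        simp [← mul_sub, abs_mul]; ring

lemma disjoint_latticeBall_smul_of_le (hr : 0 ≤ r) {K K' n n' : ℕ} {a b : Fin 3 → ℤ}
    (ha : a ∈ sparseBox K) (hb : b ∈ sparseBox K')
    (h : (4 * r * s * K + δ) / 2 ^ n ≤ (2 * r * s * K' - δ) / 2 ^ n') :
    Disjoint (latticeBall r δ n ((s : ℤ) • a)) (latticeBall r δ n' ((s : ℤ) • b)) := by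
  have ha0 : 2 * r * (((s : ℤ) • a) 0 : ℝ) ≤ 4 * r * s * K := by
    calc 2 * r * (((s : ℤ) • a) 0 : ℝ) = 2 * r * s * a 0 := by simp; ring
      _ ≤ 2 * r * s * (2 * K) := by gcongr; exact (mem_sparseBox.1 ha 0).2
      _ = 4 * r * s * K := by ring
  have hb0 : 2 * r * s * (K' : ℝ) ≤ 2 * r * (((s : ℤ) • b) 0 : ℝ) := by
    calc 2 * r * s * (K' : ℝ) ≤ 2 * r * s * b 0 := by gcongr; exact (mem_sparseBox.1 hb 0).1
      _ = 2 * r * (((s : ℤ) • b) 0 : ℝ) := by simp; ring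
  refine disjoint_latticeBall_of_div_le ?_
  calc (2 * r * (((s : ℤ) • a) 0 : ℝ) + δ) / 2 ^ n ≤ (4 * r * s * K + δ) / 2 ^ n := by gcongr
    _ ≤ (2 * r * s * K' - δ) / 2 ^ n' := h
    _ ≤ (2 * r * (((s : ℤ) • b) 0 : ℝ) - δ) / 2 ^ n' := by gcongr

lemma sixteen_mul_sparseSide_le (hδ : 0 ≤ δ) (hr : 0 < r) (hs : 1 ≤ s) (n : ℕ) :
    16 * r * s * sparseSide r δ s n ≤ δ * 2 ^ (2 * n) := by
  have hs' : (1 : ℝ) ≤ s := by exact_mod_cast hs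
  rw [← le_div_iff₀' (by positivity)]
  exact Nat.floor_le (by positivity)

lemma lt_sixteen_mul_sparseSide_add_one (hr : 0 < r) (hs : 1 ≤ s) (n : ℕ) :
    δ * 2 ^ (2 * n) < 16 * r * s * (sparseSide r δ s n + 1) := by
  have hs' : (1 : ℝ) ≤ s := by exact_mod_cast hs
  rw [← div_lt_iff₀' (by positivity)]
  exact Nat.lt_floor_add_one _

lemma norm_latticePoint_smul_lt (hδ : 0 < δ) (hr : 0 < r) (hs : 1 ≤ s) {n : ℕ}
    (hn : 4 * (2 * r * s + 2 * δ) ≤ δ * 2 ^ n) {a : Fin 3 → ℤ}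
    (ha : a ∈ sparseBox (sparseSide r δ s n)) :
    ‖latticePoint r ((s : ℤ) • a)‖ < δ * 2 ^ (2 * n) - r := by
  have h1 := norm_latticePoint_smul_le hr.le (s := s) ha
  have h2 := sixteen_mul_sparseSide_le hδ.le hr hs n
  have hs' : (1 : ℝ) ≤ s := by exact_mod_cast hs
  have hpow : (2 : ℝ) ^ n ≤ 2 ^ (2 * n) := pow_le_pow_right₀ one_le_two (by omega)
  nlinarith

lemma sparse_band_le (hδ : 0 < δ) (hr : 0 < r) (hs : 1 ≤ s) {n n' : ℕ}
    (hn : 4 * (2 * r * s + 2 * δ) ≤ δ * 2 ^ n) (hnn' : n + 2 ≤ n') :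
    (4 * r * s * sparseSide r δ s n + δ) / 2 ^ n
      ≤ (2 * r * s * sparseSide r δ s n' - δ) / 2 ^ n' := by
  have hK := sixteen_mul_sparseSide_le hδ.le hr hs n
  have hK' := lt_sixteen_mul_sparseSide_add_one (δ := δ) hr hs n'
  rw [pow_mul'] at hK hK'
  set x : ℝ := 2 ^ n
  set y : ℝ := 2 ^ n'
  have hx1 : 1 ≤ x := one_le_pow₀ one_le_two
  have hxy : 4 * x ≤ y := by
    calc 4 * x = 2 ^ (n + 2) := by rw [pow_add]; ring
      _ ≤ y := pow_le_pow_right₀ one_le_two hnn'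
  have hs' : (1 : ℝ) ≤ s := by exact_mod_cast hs
  rw [div_le_div_iff₀ (by positivity) (by positivity)]
  have hrs : 0 < r * s := by positivity
  nlinarith [mul_le_mul_of_nonneg_left hxy (by positivity : (0 : ℝ) ≤ δ * x * y),
    mul_le_mul_of_nonneg_right hn (by positivity : (0 : ℝ) ≤ x * y),
    mul_le_mul_of_nonneg_left hx1 (by positivity : (0 : ℝ) ≤ r * s * y),
    mul_le_mul_of_nonneg_left hx1 (by positivity : (0 : ℝ) ≤ δ * y),
    mul_le_mul_of_nonneg_left (hx1.trans (by linarith : x ≤ y)) (by positivity : (0 : ℝ) ≤ δ * x)]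

lemma le_sparseBox_card_mul_prob_two (hδ : 0 < δ) (hr : 0 < r) (hs : 1 ≤ s) {c : ℝ} (hc : 0 ≤ c)
    (n : ℕ) :
    exp (-(c * δ ^ 3)) * c ^ 2 * δ ^ 9 / (2 * (16 * r * s) ^ 3)
      ≤ (sparseSide r δ s n + 1 : ℝ) ^ 3
        * (exp (-(c * (δ / 2 ^ n) ^ 3)) * (c * (δ / 2 ^ n) ^ 3) ^ 2 / 2) := by
  have hK := lt_sixteen_mul_sparseSide_add_one (δ := δ) hr hs n
  rw [pow_mul'] at hK
  set x : ℝ := 2 ^ n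
  have hx1 : 1 ≤ x := one_le_pow₀ one_le_two
  have hs' : (1 : ℝ) ≤ s := by exact_mod_cast hs
  have hL : 0 < 16 * r * s := by positivity
  have hK1 : δ * x ^ 2 / (16 * r * s) ≤ sparseSide r δ s n + 1 := (div_le_iff₀' hL).2 hK.le
  have hexp : exp (-(c * δ ^ 3)) ≤ exp (-(c * (δ / x) ^ 3)) :=
    exp_le_exp.2 (neg_le_neg (by gcongr; exact div_le_self hδ.le hx1))
  calc _ = (δ * x ^ 2 / (16 * r * s)) ^ 3 * (exp (-(c * δ ^ 3)) * (c * (δ / x) ^ 3) ^ 2 / 2) := by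
        field_simp
    _ ≤ _ := by gcongr

lemma pairwiseDisjoint_sparseFamily (hδ : 0 < δ) (hr : 0 < r) (hs : δ ≤ r * s)
    (hs1 : 1 ≤ s) {n₀ : ℕ} (hn₀ : 4 * (2 * r * s + 2 * δ) ≤ δ * 2 ^ n₀) (F : Finset ℕ) :
    (F.sigma fun j => sparseBox (sparseSide r δ s (n₀ + 2 * j)) :
        Set (Σ _ : ℕ, Fin 3 → ℤ)).PairwiseDisjoint
      fun p => latticeBall r δ (n₀ + 2 * p.1) ((s : ℤ) • p.2) := by
  have cross {j j' : ℕ} (hjj' : j < j') {a b : Fin 3 → ℤ}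
      (ha : a ∈ sparseBox (sparseSide r δ s (n₀ + 2 * j)))
      (hb : b ∈ sparseBox (sparseSide r δ s (n₀ + 2 * j'))) :
      Disjoint (latticeBall r δ (n₀ + 2 * j) ((s : ℤ) • a))
        (latticeBall r δ (n₀ + 2 * j') ((s : ℤ) • b)) :=
    disjoint_latticeBall_smul_of_le hr.le ha hb <| sparse_band_le hδ hr hs1
      (hn₀.trans (by gcongr; exacts [one_le_two, by omega])) (by omega)
  rintro ⟨j, a⟩ hp ⟨j', b⟩ hq hne
  simp only [Finset.coe_sigma, Set.mem_sigma_iff, Finset.mem_coe] at hp hq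
  rcases lt_trichotomy j j' with h | rfl | h
  · exact cross h hp.2 hq.2
  · exact pairwise_disjoint_latticeBall_smul hr hs _ fun hab => hne (congrArg _ hab)
  · exact (cross h hq.2 hp.2).symm

end SparseFamily

section PoissonProcess

variable {Ω : Type*} [MeasurableSpace Ω] {P : Measure Ω} {N : Ω → Set ℝ³ → ℕ}
  (hpoisson : ∀ A : Set ℝ³, MeasurableSet A → volume A < ⊤ → ∀ k : ℕ,
    P {ω | N ω A = k} =
      ENNReal.ofReal (exp (-(volume A).toReal) * (volume A).toReal ^ k / k !))
  (hindep : ∀ {ι : Type} [Fintype ι] (A : ι → Set ℝ³),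
    (∀ i, MeasurableSet (A i)) → Pairwise (Function.onFun Disjoint A) →
    iIndepFun (fun i ω => N ω (A i)) P)

include hpoisson in
lemma measure_count_mem_le {A : Set ℝ³} (hA : MeasurableSet A) (hfin : volume A < ⊤)
    (S : Set ℕ) : P {ω | N ω A ∈ S} ≤ poissonMeasure (volume A).toNNReal S :=
  measure_preimage_le_poissonMeasure (fun k => by
    rw [hpoisson A hA hfin k, poissonMeasure_singleton]; rfl) S

include hpoisson in
lemma measure_exists_three_le_count_le (hδ : 0 ≤ δ) (K n : ℕ) :
    P {ω | ∃ m ∈ latticeCube K, 3 ≤ N ω (latticeBall r δ n m)}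
      ≤ ENNReal.ofReal ((2 * K + 1 : ℕ) ^ 3 * (π * 4 / 3 * (δ / 2 ^ n) ^ 3) ^ 3 / 6) := by
  calc P {ω | ∃ m ∈ latticeCube K, 3 ≤ N ω (latticeBall r δ n m)}
      = P (⋃ m ∈ latticeCube K, {ω | N ω (latticeBall r δ n m) ∈ Set.Ici 3}) := by
        congr 1; ext; simp
    _ ≤ ∑ m ∈ latticeCube K, P {ω | N ω (latticeBall r δ n m) ∈ Set.Ici 3} :=
        measure_biUnion_finset_le _ _
    _ ≤ ∑ m ∈ latticeCube K, ENNReal.ofReal ((π * 4 / 3 * (δ / 2 ^ n) ^ 3) ^ 3 / 6) := by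
        refine Finset.sum_le_sum fun m _ => ?_
        refine (measure_count_mem_le hpoisson (measurableSet_latticeBall n m)
          (volume_latticeBall_lt_top n m) _).trans ((poissonMeasure_Ici_three_le _).trans_eq ?_)
        rw [ENNReal.coe_toNNReal_eq_toReal, volume_latticeBall_toReal hδ]
    _ = _ := by
        rw [Finset.sum_const, card_latticeCube, nsmul_eq_mul, ← ENNReal.ofReal_natCast,
          ← ENNReal.ofReal_mul (by positivity)]
        congr 1; push_cast; ring

include hpoisson in
lemma ae_eventually_maxLatticeCount_le_two (hδ : 0 < δ) (hr : 0 < r) :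
    ∀ᵐ ω ∂P, ∀ᶠ n in atTop, maxLatticeCount N r δ n ω ≤ 2 := by
  set C := (δ / r + 3) ^ 3 * (π * 4 / 3 * δ ^ 3) ^ 3 / 6
  have hsum : ∑' n, P {ω | ∃ m ∈ latticeCube ⌈δ * 2 ^ (2 * n) / (2 * r)⌉₊,
      3 ≤ N ω (latticeBall r δ n m)} ≠ ⊤ := by
    refine ne_top_of_le_ne_top ?_ (ENNReal.tsum_le_tsum fun n =>
      (measure_exists_three_le_count_le hpoisson hδ.le _ n).trans
        (ENNReal.ofReal_le_ofReal (latticeCube_tail_bound_le_geometric hδ hr (by positivity) n)))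
    rw [← ENNReal.ofReal_tsum_of_nonneg (fun n => by positivity)
      ((summable_geometric_of_lt_one (by norm_num) (by norm_num)).mul_left C)]
    exact ENNReal.ofReal_ne_top
  filter_upwards [ae_eventually_notMem hsum] with ω hω
  filter_upwards [hω] with n hn
  refine maxLatticeCount_le fun m hm => ?_
  by_contra! h
  exact hn ⟨m, mem_latticeCube_of_norm_lt hr (hm.trans_le (by linarith)), h⟩

include hpoisson hindep in
lemma measure_iInter_count_mem_le {κ : Type} (I : Finset κ) {A : κ → Set ℝ³}
    (hA : ∀ i, MeasurableSet (A i)) (hfin : ∀ i, volume (A i) < ⊤)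
    (hdisj : (I : Set κ).PairwiseDisjoint A) (S : Set ℕ) :
    P (⋂ i ∈ I, {ω | N ω (A i) ∈ S}) ≤ ∏ i ∈ I, poissonMeasure (volume (A i)).toNNReal S := by
  have hind := hindep (fun i : I => A i) (fun i => hA i)
    (fun i j hij => hdisj i.2 j.2 (Subtype.coe_injective.ne hij))
  calc P (⋂ i ∈ I, {ω | N ω (A i) ∈ S}) = P (⋂ i : I, {ω | N ω (A i) ∈ S}) := by
        congr 1; ext; simp
    _ = ∏ i : I, P {ω | N ω (A i) ∈ S} := hind.meas_iInter fun _ => ⟨S, .of_discrete, rfl⟩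
    _ ≤ ∏ i : I, poissonMeasure (volume (A i)).toNNReal S :=
        Finset.prod_le_prod' fun i _ => measure_count_mem_le hpoisson (hA i) (hfin i) S
    _ = ∏ i ∈ I, poissonMeasure (volume (A i)).toNNReal S :=
        Finset.prod_coe_sort I fun i => poissonMeasure (volume (A i)).toNNReal S

include hpoisson hindep in
lemma measure_iInter_compl_exists_count_eq_two_le {κ : Type} (F : Finset ℕ) (B : ℕ → Finset κ)
    {A : ℕ → κ → Set ℝ³} (hA : ∀ j i, MeasurableSet (A j i)) (hfin : ∀ j i, volume (A j i) < ⊤)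
    (hdisj : (F.sigma B : Set (Σ _ : ℕ, κ)).PairwiseDisjoint fun p => A p.1 p.2) {γ : ℝ}
    (hγ : ∀ j ∈ F, γ ≤ ∑ i ∈ B j,
      exp (-(volume (A j i)).toReal) * (volume (A j i)).toReal ^ 2 / 2) :
    P (⋂ j ∈ F, {ω | ∃ i ∈ B j, N ω (A j i) = 2}ᶜ) ≤ ENNReal.ofReal (exp (-γ)) ^ F.card := by
  have hsets : ⋂ j ∈ F, {ω | ∃ i ∈ B j, N ω (A j i) = 2}ᶜ
      = ⋂ p ∈ F.sigma B, {ω | N ω (A p.1 p.2) ∈ ({2}ᶜ : Set ℕ)} := by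
    ext; simp [Sigma.forall]; tauto
  rw [hsets]
  calc P (⋂ p ∈ F.sigma B, {ω | N ω (A p.1 p.2) ∈ ({2}ᶜ : Set ℕ)})
      ≤ ∏ p ∈ F.sigma B, poissonMeasure (volume (A p.1 p.2)).toNNReal {2}ᶜ :=
        measure_iInter_count_mem_le hpoisson hindep (F.sigma B) (A := fun p => A p.1 p.2)
          (fun p => hA p.1 p.2) (fun p => hfin p.1 p.2) hdisj {2}ᶜ
    _ = ∏ j ∈ F, ∏ i ∈ B j, poissonMeasure (volume (A j i)).toNNReal {2}ᶜ :=
        Finset.prod_sigma _ _ _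
    _ ≤ ∏ _j ∈ F, ENNReal.ofReal (exp (-γ)) := Finset.prod_le_prod' fun j hj =>
        (prod_poissonMeasure_compl_two_le _ _).trans
          (ENNReal.ofReal_le_ofReal (exp_le_exp.2 (neg_le_neg (hγ j hj))))
    _ = ENNReal.ofReal (exp (-γ)) ^ F.card := Finset.prod_const _

include hpoisson hindep in
lemma ae_frequently_two_le_maxLatticeCount (hδ : 0 < δ) (hr : 0 < r) :
    ∀ᵐ ω ∂P, ∃ᶠ n in atTop, 2 ≤ maxLatticeCount N r δ n ω := by
  obtain ⟨s, hs, hs1⟩ : ∃ s : ℕ, δ ≤ r * s ∧ 1 ≤ s :=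
    ⟨⌈δ / r⌉₊, (div_le_iff₀' hr).1 (Nat.le_ceil _), Nat.one_le_iff_ne_zero.2 (by positivity)⟩
  obtain ⟨n₀, hn₀⟩ := pow_unbounded_of_one_lt (4 * (2 * r * s + 2 * δ) / δ) one_lt_two
  rw [div_lt_iff₀' hδ] at hn₀
  have hlarge (j : ℕ) : 4 * (2 * r * s + 2 * δ) ≤ δ * 2 ^ (n₀ + 2 * j) :=
    hn₀.le.trans (by gcongr; exacts [one_le_two, by omega])
  set γ := exp (-(π * 4 / 3 * δ ^ 3)) * (π * 4 / 3) ^ 2 * δ ^ 9 / (2 * (16 * r * s) ^ 3)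
  have hq : ENNReal.ofReal (exp (-γ)) < 1 := by
    rw [ENNReal.ofReal_lt_one, Real.exp_lt_one_iff, neg_lt_zero]; positivity
  have hbound (J k : ℕ) : P (⋂ j ∈ Finset.Ico J (J + k),
      {ω | ∃ a ∈ sparseBox (sparseSide r δ s (n₀ + 2 * j)),
        N ω (latticeBall r δ (n₀ + 2 * j) ((s : ℤ) • a)) = 2}ᶜ)
      ≤ ENNReal.ofReal (exp (-γ)) ^ k := by
    have := measure_iInter_compl_exists_count_eq_two_le hpoisson hindep (Finset.Ico J (J + k))
      (fun j => sparseBox (sparseSide r δ s (n₀ + 2 * j)))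
      (A := fun j a => latticeBall r δ (n₀ + 2 * j) ((s : ℤ) • a))
      (fun _ _ => measurableSet_latticeBall _ _) (fun _ _ => volume_latticeBall_lt_top _ _)
      (pairwiseDisjoint_sparseFamily hδ hr hs hs1 (hlarge 0) _) (γ := γ) fun j _ => ?_
    · rwa [Nat.card_Ico, Nat.add_sub_cancel_left] at this
    simp only [volume_latticeBall_toReal hδ.le, Finset.sum_const, card_sparseBox, nsmul_eq_mul]
    push_cast
    exact le_sparseBox_card_mul_prob_two hδ hr hs1 (by positivity) _
  filter_upwards [ae_frequently_of_measure_iInter_compl_le hq hbound] with ω hω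
  refine (tendsto_atTop_mono (fun j => show j ≤ n₀ + 2 * j by omega) tendsto_id :
    Tendsto (fun j => n₀ + 2 * j) atTop atTop).frequently (hω.mono ?_)
  rintro j ⟨a, ha, h2⟩
  have := le_maxLatticeCount (N := N) (ω := ω) hr
    (norm_latticePoint_smul_lt hδ hr hs1 (hlarge j) ha)
  rwa [h2] at this

end PoissonProcess

theorem poisson_lattice_maximum_limsup_general
    {Ω : Type*} [MeasurableSpace Ω] (P : Measure Ω)
    (N : Ω → Set (EuclideanSpace ℝ (Fin 3)) → ℕ)
    (hpoisson : ∀ A : Set (EuclideanSpace ℝ (Fin 3)), MeasurableSet A →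
      volume A < ⊤ → ∀ k : ℕ,
      P {ω | N ω A = k} =
        ENNReal.ofReal (Real.exp (-(volume A).toReal) *
          (volume A).toReal ^ k / (Nat.factorial k)))
    (hindep : ∀ {ι : Type} [Fintype ι]
      (A : ι → Set (EuclideanSpace ℝ (Fin 3))),
      (∀ i, MeasurableSet (A i)) → Pairwise (Function.onFun Disjoint A) →
      iIndepFun (fun i ω => N ω (A i)) P)
    (δ r : ℝ) (hδ : 0 < δ) (hr : 0 < r) :
    ∀ᵐ ω ∂P, Filter.limsup (fun n : ℕ => maxLatticeCount N r δ n ω) atTop = 2 := by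
  filter_upwards [ae_eventually_maxLatticeCount_le_two hpoisson hδ hr,
    ae_frequently_two_le_maxLatticeCount hpoisson hindep hδ hr] with ω hle hge
  exact le_antisymm (limsup_le_of_le (isCoboundedUnder_le_of_le atTop fun _ => Nat.zero_le _) hle)
    (le_limsup_of_frequently_le hge ⟨2, hle⟩)

/-- For a Poisson point process `ω` on `ℝ³` with Lebesgue intensity, fixed
`δ, r > 0`, almost surely
`limsup_{n→∞} max_{z ∈ 2rℤ³ ∩ B(0, δ2^{2n} - r)} ω(B(2^{-n}z, 2^{-n}δ)) = 2`. -/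
theorem poisson_lattice_maximum_limsup
    {Ω : Type*} [MeasurableSpace Ω] (P : Measure Ω) [IsProbabilityMeasure P]
    (N : Ω → Set (EuclideanSpace ℝ (Fin 3)) → ℕ)
    (hmeas : ∀ A : Set (EuclideanSpace ℝ (Fin 3)), MeasurableSet A →
      Measurable fun ω => N ω A)
    (hpoisson : ∀ A : Set (EuclideanSpace ℝ (Fin 3)), MeasurableSet A →
      volume A < ⊤ → ∀ k : ℕ,
      P {ω | N ω A = k} =
        ENNReal.ofReal (Real.exp (-(volume A).toReal) *
          (volume A).toReal ^ k / (Nat.factorial k)))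
    (hindep : ∀ {ι : Type} [Fintype ι]
      (A : ι → Set (EuclideanSpace ℝ (Fin 3))),
      (∀ i, MeasurableSet (A i)) → Pairwise (Function.onFun Disjoint A) →
      iIndepFun (fun i ω => N ω (A i)) P)
    (δ r : ℝ) (hδ : 0 < δ) (hr : 0 < r) :
    ∀ᵐ ω ∂P, Filter.limsup (fun n : ℕ => maxLatticeCount N r δ n ω) atTop = 2 :=
  poisson_lattice_maximum_limsup_general P N hpoisson hindep δ r hδ hr
end
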